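/- Let X, Z be indecomposable complexes in C_{η+2}(proj Λ) and let δ: X → Y → Z be an almost split sequence in C_{η+2}(proj Λ). If X^{η+2} = 0, Y^{η+2} = 0 and Z^{η+2} = 0, then [δ]_*: [X]_* → [Y]_* → [Z]_* is an almost split sequence in C_{η+1}(proj Λ). -/

import Mathlib

open CategoryTheory CategoryTheory.Limits ZeroObject

noncomputable section

namespace Paper

/-- The ambient category: cochain complexes of right `Λ`-modules indexed by `ℤ`. -/
abbrev Amb (Λ : Type) [Ring Λ] := CochainComplex (ModuleCat.{0} Λᵐᵒᵖ) ℤ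

variable {Λ : Type} [Ring Λ]

/-- All cells are finitely generated projective right `Λ`-modules. -/
def ProjCells (X : Amb Λ) : Prop :=
  ∀ i : ℤ, Module.Finite Λᵐᵒᵖ (X.X i) ∧ Module.Projective Λᵐᵒᵖ (X.X i)

/-- The complex is supported in the window `[a, b]`. -/
def Supp (a b : ℤ) (X : Amb Λ) : Prop :=
  ∀ i : ℤ, (i < a ∨ b < i) → IsZero (X.X i)

/-- Object of the category `C_{[a,b]}(proj Λ)` of complexes of finitely generated
projective modules concentrated in the window `[a, b]`.  (The category
`C_n(proj Λ)` of the paper corresponds to the window `[1, n]`; a window `[a, b]`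
corresponds to `C_{b-a+1}(proj Λ)` after the canonical reindexing.) -/
def InC (a b : ℤ) (X : Amb Λ) : Prop := Supp a b X ∧ ProjCells X

def IsSect {X Y : Amb Λ} (f : X ⟶ Y) : Prop := ∃ h : Y ⟶ X, f ≫ h = 𝟙 X

def IsRetr {X Y : Amb Λ} (f : X ⟶ Y) : Prop := ∃ h : Y ⟶ X, h ≫ f = 𝟙 Y

/-- `f` is irreducible in `C_{[a,b]}(proj Λ)`. -/
def Irred (a b : ℤ) {X Y : Amb Λ} (f : X ⟶ Y) : Prop :=
  ¬ IsSect f ∧ ¬ IsRetr f ∧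
    ∀ (W : Amb Λ), InC a b W → ∀ (g : X ⟶ W) (h : W ⟶ Y),
      g ≫ h = f → IsRetr h ∨ IsSect g

/-- Indecomposable complex. -/
def Indec (X : Amb Λ) : Prop :=
  ¬ IsZero X ∧ ∀ (A B : Amb Λ), (X ≅ A ⊞ B) → IsZero A ∨ IsZero B

/-- A conflation: in every degree a split short exact sequence. -/
def DegSplit {X Y Z : Amb Λ} (f : X ⟶ Y) (g : Y ⟶ Z) : Prop :=
  ∀ j : ℤ, ∃ w : f.f j ≫ g.f j = 0,
    Nonempty (ShortComplex.mk (f.f j) (g.f j) w).Splitting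

/-- Minimal left almost split morphism in `C_{[a,b]}(proj Λ)`. -/
def MinLeftAS (a b : ℤ) {X Y : Amb Λ} (f : X ⟶ Y) : Prop :=
  ¬ IsSect f ∧
    (∀ (W : Amb Λ), InC a b W → ∀ u : X ⟶ W, ¬ IsSect u → ∃ v : Y ⟶ W, f ≫ v = u) ∧
    (∀ u : Y ⟶ Y, f ≫ u = f → IsIso u)

/-- Minimal right almost split morphism in `C_{[a,b]}(proj Λ)`. -/
def MinRightAS (a b : ℤ) {Y Z : Amb Λ} (g : Y ⟶ Z) : Prop :=
  ¬ IsRetr g ∧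
    (∀ (W : Amb Λ), InC a b W → ∀ u : W ⟶ Z, ¬ IsRetr u → ∃ v : W ⟶ Y, v ≫ g = u) ∧
    (∀ u : Y ⟶ Y, u ≫ g = g → IsIso u)

/-- Almost split sequence in `C_{[a,b]}(proj Λ)`. -/
def AlmostSplit (a b : ℤ) {X Y Z : Amb Λ} (f : X ⟶ Y) (g : Y ⟶ Z) : Prop :=
  DegSplit f g ∧ MinLeftAS a b f ∧ MinRightAS a b g

/-- `X` (supported in a window starting at `a`) can be extended to the left. -/
def ExtLeft (a : ℤ) (X : Amb Λ) : Prop :=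
  ∃ P : ModuleCat.{0} Λᵐᵒᵖ, Module.Finite Λᵐᵒᵖ P ∧ Module.Projective Λᵐᵒᵖ P ∧
    ∃ δ : P ⟶ X.X a, δ ≠ 0 ∧ δ ≫ X.d a (a + 1) = 0

/-- `X` (supported in a window ending at `b`) can be extended to the right. -/
def ExtRight (b : ℤ) (X : Amb Λ) : Prop :=
  ∃ P : ModuleCat.{0} Λᵐᵒᵖ, Module.Finite Λᵐᵒᵖ P ∧ Module.Projective Λᵐᵒᵖ P ∧
    ∃ δ : X.X b ⟶ P, δ ≠ 0 ∧ X.d (b - 1) b ≫ δ = 0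

/-- Bounded complex. -/
def BddCplx (X : Amb Λ) : Prop := ∃ a b : ℤ, Supp a b X

/-- Contractible complex, i.e. zero in the homotopy category. -/
def Contractible (X : Amb Λ) : Prop := Nonempty (Homotopy (𝟙 X) 0)

/-- Indecomposable nonzero object of `K^b(proj Λ)`. -/
def HIndec (X : Amb Λ) : Prop :=
  ¬ Contractible X ∧
    ∀ (A B : Amb Λ), ProjCells A → BddCplx A → ProjCells B → BddCplx B →
      Nonempty (HomotopyEquiv X (A ⊞ B)) → Contractible A ∨ Contractible B

/-- The candidate lengths of `X` as an object of `K^b(proj Λ)`. -/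
def lenSet (X : Amb Λ) : Set ℕ :=
  {d | ∃ (Y : Amb Λ) (r s : ℤ), r ≤ s ∧ Nonempty (HomotopyEquiv X Y) ∧
        ProjCells Y ∧ Supp r s Y ∧ d = (s - r).toNat}

/-- `ℓ(X)`. -/
def len (X : Amb Λ) : ℕ := sInf (lenSet X)

/-- `η` is the strong global dimension of `Λ`. -/
def IsSGdim (Λ : Type) [Ring Λ] (η : ℕ) : Prop :=
  IsGreatest {d : ℕ | ∃ X : Amb Λ, ProjCells X ∧ BddCplx X ∧ HIndec X ∧ len X = d} η

/-- Brutal truncation of a complex to the set of degrees satisfying `P`. -/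
def chop (P : ℤ → Prop) [DecidablePred P] (X : Amb Λ) : Amb Λ where
  X i := if P i then X.X i else 0
  d i j :=
    if hi : P i then
      if hj : P j then
        eqToHom (if_pos hi) ≫ X.d i j ≫ eqToHom (if_pos hj).symm
      else 0
    else 0
  shape i j h := by
    by_cases hi : P i
    · by_cases hj : P j
      · simp [hi, hj, X.shape i j h]
      · simp [hi, hj]
    · simp [hi]
  d_comp_d' i j k hij hjk := by
    by_cases hi : P i <;> by_cases hj : P j <;> by_cases hk : P k <;>
      simp [hi, hj, hk]

/-- Brutal truncation of a chain map. -/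
def chopMap (P : ℤ → Prop) [DecidablePred P] {X Y : Amb Λ} (f : X ⟶ Y) :
    chop P X ⟶ chop P Y where
  f i :=
    if h : P i then eqToHom (if_pos h) ≫ f.f i ≫ eqToHom (if_pos h).symm
    else 0
  comm' i j hij := by
    by_cases hi : P i <;> by_cases hj : P j <;>
      simp [chop, hi, hj] <;> first | exact (comp_zero).symm | exact comp_zero

/-- `E_{[a,b]}`-projective complex (lifting against proper epimorphisms). -/
def EProj (a b : ℤ) (P : Amb Λ) : Prop :=
  ∀ (W₁ W₂ : Amb Λ), InC a b W₁ → InC a b W₂ → ∀ v : W₁ ⟶ W₂,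
    (∀ j : ℤ, Epi (v.f j)) → ∀ f : P ⟶ W₂, ∃ g : P ⟶ W₁, g ≫ v = f

/-- `E_{[a,b]}`-injective complex (extending along proper monomorphisms). -/
def EInj (a b : ℤ) (I : Amb Λ) : Prop :=
  ∀ (W₁ W₂ : Amb Λ), InC a b W₁ → InC a b W₂ → ∀ v : W₁ ⟶ W₂,
    (∀ j : ℤ, Mono (v.f j)) → ∀ f : W₁ ⟶ I, ∃ g : W₂ ⟶ I, v ≫ g = f

/-!
All three complexes vanish in degree `η + 2`, so deleting the last cell replaces each of them by
an isomorphic complex and `[δ]_*` by an isomorphic sequence. Being almost split is invariant under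
isomorphisms of sequences, and passing from the window `[1, η + 2]` to `[1, η + 1]` only shrinks
the class of test objects `W` in the factorization properties.
-/

lemma isZero_X_of_supp_of_isZero {a c : ℤ} {X : Amb Λ} (hX : Supp a c X) (hc : IsZero (X.X c))
    {i : ℤ} (hi : c - 1 < i) : IsZero (X.X i) := by
  rcases (show c ≤ i by omega).eq_or_lt with rfl | h
  · exact hc
  · exact hX i (Or.inr h)

section Truncation

variable (P : ℤ → Prop) [DecidablePred P]

lemma isZero_chop_X (X : Amb Λ) {i : ℤ} (hi : ¬ P i) : IsZero ((chop P X).X i) := by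
  simp only [chop, if_neg hi]
  exact isZero_zero _

lemma chop_X_of_pos (X : Amb Λ) {i : ℤ} (hi : P i) : (chop P X).X i = X.X i := if_pos hi

lemma chop_d_of_pos (X : Amb Λ) {i j : ℤ} (hi : P i) (hj : P j) :
    (chop P X).d i j =
      eqToHom (chop_X_of_pos P X hi) ≫ X.d i j ≫ eqToHom (chop_X_of_pos P X hj).symm :=
  (dif_pos hi).trans (dif_pos hj)

def chopIso (X : Amb Λ) (hX : ∀ i, ¬ P i → IsZero (X.X i)) : chop P X ≅ X :=
  HomologicalComplex.Hom.isoOfComponents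
    (fun i => if h : P i then eqToIso (chop_X_of_pos P X h)
      else (isZero_chop_X P X h).iso (hX i h))
    (fun i j _ => by
      by_cases hi : P i
      · by_cases hj : P j
        · simp [chop_d_of_pos P X hi hj, hi, hj]
        · exact (hX j hj).eq_of_tgt _ _
      · exact (isZero_chop_X P X hi).eq_of_src _ _)

lemma chopIso_hom_f_of_pos (X : Amb Λ) (hX : ∀ i, ¬ P i → IsZero (X.X i)) {i : ℤ}
    (hi : P i) :
    (chopIso P X hX).hom.f i = eqToHom (chop_X_of_pos P X hi) := by
  simp only [chopIso, HomologicalComplex.Hom.isoOfComponents_hom_f, dif_pos hi, eqToIso.hom]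

lemma chopMap_f_of_pos {X Y : Amb Λ} (f : X ⟶ Y) {i : ℤ} (hi : P i) :
    (chopMap P f).f i =
      eqToHom (chop_X_of_pos P X hi) ≫ f.f i ≫ eqToHom (chop_X_of_pos P Y hi).symm :=
  dif_pos hi

lemma chopMap_comp_chopIso_hom {X Y : Amb Λ} (f : X ⟶ Y) (hX : ∀ i, ¬ P i → IsZero (X.X i))
    (hY : ∀ i, ¬ P i → IsZero (Y.X i)) :
    chopMap P f ≫ (chopIso P Y hY).hom = (chopIso P X hX).hom ≫ f := by
  ext i : 1
  by_cases hi : P i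
  · simp [chopMap_f_of_pos P f hi, chopIso_hom_f_of_pos P _ _ hi]
  · exact (hY i hi).eq_of_tgt _ _

end Truncation

lemma InC.mono {a b a' b' : ℤ} {W : Amb Λ} (hW : InC a b W) (ha : a' ≤ a) (hb : b ≤ b') :
    InC a' b' W :=
  ⟨fun i hi => hW.1 i (by omega), hW.2⟩

section IsoInvariance

variable {X Y Z X' Y' Z' : Amb Λ} {f : X ⟶ Y} {g : Y ⟶ Z} {f' : X' ⟶ Y'} {g' : Y' ⟶ Z'}
  (eX : X' ≅ X) (eY : Y' ≅ Y) (eZ : Z' ≅ Z)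

lemma comp_symm_hom_eq_of_comp_hom_eq (hf : f' ≫ eY.hom = eX.hom ≫ f) :
    f ≫ eY.symm.hom = eX.symm.hom ≫ f' := by
  rw [Iso.symm_hom, Iso.symm_hom, Iso.comp_inv_eq, Category.assoc, hf, Iso.inv_hom_id_assoc]

lemma IsSect.of_iso (hf : f' ≫ eY.hom = eX.hom ≫ f) (h : IsSect f) : IsSect f' := by
  obtain ⟨r, hr⟩ := h
  exact ⟨eY.hom ≫ r ≫ eX.inv, by simp [reassoc_of% hf, reassoc_of% hr]⟩

lemma isSect_iff_of_iso (hf : f' ≫ eY.hom = eX.hom ≫ f) : IsSect f' ↔ IsSect f :=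
  ⟨IsSect.of_iso eX.symm eY.symm (comp_symm_hom_eq_of_comp_hom_eq eX eY hf),
    IsSect.of_iso eX eY hf⟩

lemma IsRetr.of_iso (hf : f' ≫ eY.hom = eX.hom ≫ f) (h : IsRetr f) : IsRetr f' := by
  obtain ⟨s, hs⟩ := h
  refine ⟨eY.hom ≫ s ≫ eX.inv, ?_⟩
  rw [← cancel_mono eY.hom]
  simp [hf, hs]

lemma isRetr_iff_of_iso (hf : f' ≫ eY.hom = eX.hom ≫ f) : IsRetr f' ↔ IsRetr f :=
  ⟨IsRetr.of_iso eX.symm eY.symm (comp_symm_hom_eq_of_comp_hom_eq eX eY hf),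
    IsRetr.of_iso eX eY hf⟩

variable {a b a' b' : ℤ}

lemma MinLeftAS.of_iso (hf : f' ≫ eY.hom = eX.hom ≫ f)
    (hsub : ∀ W : Amb Λ, InC a' b' W → InC a b W) (h : MinLeftAS a b f) :
    MinLeftAS a' b' f' := by
  obtain ⟨hnot, hfac, hmin⟩ := h
  refine ⟨(isSect_iff_of_iso eX eY hf).not.mpr hnot, fun W hW u hu => ?_, fun u hu => ?_⟩
  · have hu' : ¬ IsSect (eX.inv ≫ u) :=
      (isSect_iff_of_iso eX (Iso.refl W) (by simp)).not.mp hu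
    obtain ⟨v, hv⟩ := hfac W (hsub W hW) (eX.inv ≫ u) hu'
    exact ⟨eY.hom ≫ v, by simp [reassoc_of% hf, hv]⟩
  · have hconj : f ≫ (eY.inv ≫ u ≫ eY.hom) = f := by
      rw [← cancel_epi eX.hom, ← reassoc_of% hf]
      simp [reassoc_of% hu, hf]
    have := hmin _ hconj
    have hu_eq : u = eY.hom ≫ (eY.inv ≫ u ≫ eY.hom) ≫ eY.inv := by simp
    rw [hu_eq]
    infer_instance

lemma MinRightAS.of_iso (hg : g' ≫ eZ.hom = eY.hom ≫ g)
    (hsub : ∀ W : Amb Λ, InC a' b' W → InC a b W) (h : MinRightAS a b g) :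
    MinRightAS a' b' g' := by
  obtain ⟨hnot, hfac, hmin⟩ := h
  refine ⟨(isRetr_iff_of_iso eY eZ hg).not.mpr hnot, fun W hW u hu => ?_, fun u hu => ?_⟩
  · have hu' : ¬ IsRetr (u ≫ eZ.hom) :=
      (isRetr_iff_of_iso (Iso.refl W) eZ (by simp)).not.mp hu
    obtain ⟨v, hv⟩ := hfac W (hsub W hW) (u ≫ eZ.hom) hu'
    refine ⟨v ≫ eY.inv, ?_⟩
    rw [← cancel_mono eZ.hom]
    simp [hg, hv]
  · have hconj : (eY.inv ≫ u ≫ eY.hom) ≫ g = g := by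
      rw [← cancel_epi eY.hom]
      simp [← hg, reassoc_of% hu]
    have := hmin _ hconj
    have hu_eq : u = eY.hom ≫ (eY.inv ≫ u ≫ eY.hom) ≫ eY.inv := by simp
    rw [hu_eq]
    infer_instance

lemma DegSplit.of_iso (hf : f' ≫ eY.hom = eX.hom ≫ f) (hg : g' ≫ eZ.hom = eY.hom ≫ g)
    (h : DegSplit f g) : DegSplit f' g' := by
  intro j
  obtain ⟨w, ⟨s⟩⟩ := h j
  have hf_j : f'.f j ≫ eY.hom.f j = eX.hom.f j ≫ f.f j := by
    rw [← HomologicalComplex.comp_f, hf, HomologicalComplex.comp_f]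
  have hg_j : g'.f j ≫ eZ.hom.f j = eY.hom.f j ≫ g.f j := by
    rw [← HomologicalComplex.comp_f, hg, HomologicalComplex.comp_f]
  have w' : f'.f j ≫ g'.f j = 0 := by
    rw [← cancel_mono (eZ.hom.f j), Category.assoc, hg_j, reassoc_of% hf_j, w]
    simp
  exact ⟨w', ⟨s.ofIso (ShortComplex.isoMk (HomologicalComplex.Hom.isoApp eX j)
    (HomologicalComplex.Hom.isoApp eY j) (HomologicalComplex.Hom.isoApp eZ j)
    hf_j.symm hg_j.symm).symm⟩⟩

lemma AlmostSplit.of_iso (hf : f' ≫ eY.hom = eX.hom ≫ f) (hg : g' ≫ eZ.hom = eY.hom ≫ g)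
    (hsub : ∀ W : Amb Λ, InC a' b' W → InC a b W) (h : AlmostSplit a b f g) :
    AlmostSplit a' b' f' g' :=
  ⟨h.1.of_iso eX eY eZ hf hg, h.2.1.of_iso eX eY hf hsub, h.2.2.of_iso eY eZ hg hsub⟩

end IsoInvariance

theorem statement8_general
    (Λ : Type) [Ring Λ]
    (η : ℕ)
    (X Y Z : Amb Λ) (hX : InC 1 ((η : ℤ) + 2) X) (hY : InC 1 ((η : ℤ) + 2) Y)
    (hZ : InC 1 ((η : ℤ) + 2) Z)
    (f : X ⟶ Y) (g : Y ⟶ Z) (hδ : AlmostSplit 1 ((η : ℤ) + 2) f g)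
    (h1 : IsZero (X.X ((η : ℤ) + 2))) (h2 : IsZero (Y.X ((η : ℤ) + 2)))
    (h3 : IsZero (Z.X ((η : ℤ) + 2))) :
    AlmostSplit 1 ((η : ℤ) + 1)
      (chopMap (fun i => i ≤ (η : ℤ) + 1) f)
      (chopMap (fun i => i ≤ (η : ℤ) + 1) g) := by
  have hzX : ∀ i : ℤ, ¬ i ≤ (η : ℤ) + 1 → IsZero (X.X i) :=
    fun _ hi => isZero_X_of_supp_of_isZero hX.1 h1 (by omega)
  have hzY : ∀ i : ℤ, ¬ i ≤ (η : ℤ) + 1 → IsZero (Y.X i) :=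
    fun _ hi => isZero_X_of_supp_of_isZero hY.1 h2 (by omega)
  have hzZ : ∀ i : ℤ, ¬ i ≤ (η : ℤ) + 1 → IsZero (Z.X i) :=
    fun _ hi => isZero_X_of_supp_of_isZero hZ.1 h3 (by omega)
  exact hδ.of_iso (chopIso _ X hzX) (chopIso _ Y hzY) (chopIso _ Z hzZ)
    (chopMap_comp_chopIso_hom _ f hzX hzY) (chopMap_comp_chopIso_hom _ g hzY hzZ)
    (fun W hW => hW.mono le_rfl (by omega))

theorem statement8 (K : Type) [Field K] [IsAlgClosed K]
    (Λ : Type) [Ring Λ] [Algebra K Λ] [FiniteDimensional K Λ]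
    (η : ℕ) (hη : 1 ≤ η) (hsgd : IsSGdim Λ η)
    (X Y Z : Amb Λ) (hX : InC 1 ((η : ℤ) + 2) X) (hY : InC 1 ((η : ℤ) + 2) Y)
    (hZ : InC 1 ((η : ℤ) + 2) Z) (hIX : Indec X) (hIZ : Indec Z)
    (f : X ⟶ Y) (g : Y ⟶ Z) (hδ : AlmostSplit 1 ((η : ℤ) + 2) f g)
    (h1 : IsZero (X.X ((η : ℤ) + 2))) (h2 : IsZero (Y.X ((η : ℤ) + 2)))
    (h3 : IsZero (Z.X ((η : ℤ) + 2))) :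
    AlmostSplit 1 ((η : ℤ) + 1)
      (chopMap (fun i => i ≤ (η : ℤ) + 1) f)
      (chopMap (fun i => i ≤ (η : ℤ) + 1) g) :=
  statement8_general Λ η X Y Z hX hY hZ f g hδ h1 h2 h3

end Paper
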